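/- For every natural number n, ∑_{i=0}^{n} (-2)^i * L^{vu}_{n,i} = 2^n, where L^{vu}_{n,i} is the number of G-Motzkin paths of length n with i vu-valleys, with closed form L^{vu}_{n,i} = (1/(n+1)) * ∑_{k=0}^{n-i} ∑_{j=0}^{k} C(n+1, k) * C(k+i-1, i) * C(k, j) * C(n+1-k, n-k-i-j) * 2^j. -/

import Mathlib

section Helpers
open Finset PowerSeries

lemma coeff_one_sub_X_pow (k j : ℕ) :
    (PowerSeries.coeff j) ((1 - PowerSeries.X) ^ k) = (-1 : ℚ) ^ j * k.choose j := by
  induction k generalizing j with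
  | zero =>
    cases j with
    | zero => simp
    | succ j => simp
  | succ k ih =>
    have : ((1 - PowerSeries.X) ^ (k+1) : ℚ⟦X⟧) = (1 - X) ^ k - ((1 - X) ^ k) * X := by
      ring
    rw [this, map_sub]
    cases j with
    | zero => simp [ih]
    | succ j =>
      rw [PowerSeries.coeff_succ_mul_X, ih, ih, Nat.choose_succ_succ' ]
      push_cast
      ring

lemma keyA' (k s : ℕ) (hs : 1 ≤ s) :
    ∑ i ∈ Finset.range (s+1), (-1 : ℚ)^(s-i) * (k+i-1).choose i * k.choose (s-i) = 0 := by
  cases k with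
  | zero =>
    rw [Finset.sum_eq_zero]
    intro i hi
    rcases eq_or_lt_of_le (Finset.mem_range_succ_iff.mp hi) with h | h
    · subst h
      simp [Nat.choose_eq_zero_of_lt (show i - 1 < i by omega)]
    · simp [Nat.choose_eq_zero_of_lt (by omega : (0:ℕ) < s - i)]
  | succ d =>
    have h1 : ((PowerSeries.mk fun n ↦ ((d + n).choose d : ℚ)) * ((1 - X) ^ (d + 1))) = 1 :=
      PowerSeries.mk_add_choose_mul_one_sub_pow_eq_one ℚ d
    have h2 := congrArg (PowerSeries.coeff s) h1
    rw [PowerSeries.coeff_mul, PowerSeries.coeff_one, if_neg (by omega)] at h2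
    rw [Finset.Nat.sum_antidiagonal_eq_sum_range_succ_mk] at h2
    simp only [PowerSeries.coeff_mk, coeff_one_sub_X_pow] at h2
    rw [← h2]
    apply Finset.sum_congr rfl
    intro i hi
    have hi' : i ≤ s := Finset.mem_range_succ_iff.mp hi
    have : (d + 1 + i - 1).choose i = (d + i).choose d := by
      have : d + 1 + i - 1 = d + i := by omega
      rw [this, ← Nat.choose_symm_add, Nat.add_comm]
    rw [this]
    ring

lemma sq_sum_eq_diag_sum (n : ℕ) (f : ℕ → ℕ → ℚ) (hf : ∀ i j, n < i + j → f i j = 0) :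
    ∑ i ∈ Finset.range (n+1), ∑ j ∈ Finset.range (n+1), f i j
      = ∑ s ∈ Finset.range (n+1), ∑ i ∈ Finset.range (s+1), f i (s-i) := by
  rw [← Finset.sum_product']
  rw [Finset.sum_sigma']
  rw [← Finset.sum_filter_of_ne (s := Finset.range (n+1) ×ˢ Finset.range (n+1))
    (p := fun p => p.1 + p.2 ≤ n) (f := fun p => f p.1 p.2)
    (by intro p _ hne; by_contra hc; exact hne (hf p.1 p.2 (by omega)))]
  apply Finset.sum_nbij' (i := fun p => (⟨p.1 + p.2, p.1⟩ : Σ _ : ℕ, ℕ))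
    (j := fun q => (q.2, q.1 - q.2))
  · intro p hp
    simp only [Finset.mem_filter, Finset.mem_product, Finset.mem_range] at hp
    simp only [Finset.mem_sigma, Finset.mem_range]
    omega
  · intro q hq
    simp only [Finset.mem_sigma, Finset.mem_range] at hq
    simp only [Finset.mem_filter, Finset.mem_product, Finset.mem_range]
    omega
  · intro p hp
    simp only [Finset.mem_filter, Finset.mem_product, Finset.mem_range] at hp
    simp
  · intro q hq
    simp only [Finset.mem_sigma, Finset.mem_range] at hq
    obtain ⟨a, b⟩ := q
    simp only [Sigma.mk.inj_iff] at *
    constructor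
    · omega
    · exact heq_of_eq rfl
  · intro p hp
    simp

lemma keyA (k s : ℕ) (hs : 1 ≤ s) :
    ∑ i ∈ Finset.range (s+1), (-1 : ℚ)^i * (k+i-1).choose i * k.choose (s-i) = 0 := by
  have h := keyA' k s hs
  have h2 : ∑ i ∈ Finset.range (s+1), (-1 : ℚ)^i * (k+i-1).choose i * k.choose (s-i)
      = (-1 : ℚ)^s * ∑ i ∈ Finset.range (s+1),
          (-1 : ℚ)^(s-i) * (k+i-1).choose i * k.choose (s-i) := by
    rw [Finset.mul_sum]
    apply Finset.sum_congr rfl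
    intro i hi
    have hi' : i ≤ s := Finset.mem_range_succ_iff.mp hi
    have : (-1 : ℚ)^s * (-1 : ℚ)^(s-i) = (-1 : ℚ)^i := by
      rw [← pow_add, show s + (s - i) = 2*(s-i) + i by omega, pow_add, pow_mul]
      simp
    rw [← mul_assoc, ← mul_assoc, this]
  rw [h2, h, mul_zero]

lemma nat_sum : ∀ n : ℕ, ∑ k ∈ Finset.range (n+1), (n+1).choose k * (n+1-k) = (n+1) * 2^n := by
  intro n
  have : ∀ k ∈ Finset.range (n+1), (n+1).choose k * (n+1-k) = n.choose k * (n+1) := fun k _ =>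
    (Nat.choose_mul_succ_eq n k).symm
  rw [Finset.sum_congr rfl this, ← Finset.sum_mul, Nat.sum_range_choose, mul_comm]

end Helpers


/-- `Lvu n i` is the number of G-Motzkin paths of length `n` with `i`
vu-valleys, given by the closed form
`L^{vu}_{n,i} = (1/(n+1)) ∑_{k=0}^{n-i} ∑_{j=0}^{k} C(n+1,k) C(k+i-1,i) C(k,j) C(n+1-k, n-k-i-j) 2^j`,
where `C(k+i-1, i)` is `0` for `k = 0` and `i ≥ 1`, and the binomial
`C(n+1-k, n-k-i-j)` vanishes when `n-k-i-j < 0`. -/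
def gMotzkinLvu (n i : ℕ) : ℚ :=
  (1 / (n + 1 : ℚ)) *
    ∑ k ∈ Finset.range (n - i + 1), ∑ j ∈ Finset.range (k + 1),
      ((n + 1).choose k : ℚ) * (k + i - 1).choose i * k.choose j *
        (if k + i + j ≤ n then ((n + 1 - k).choose (n - k - i - j) : ℚ) else 0) *
        2 ^ j

/-- For every `n`, `∑_{i=0}^{n} (-2)^i * L^{vu}_{n,i} = 2^n`. -/
theorem alternating_two_pow_sum_gMotzkinLvu (n : ℕ) :
    ∑ i ∈ Finset.range (n + 1), (-2 : ℚ) ^ i * gMotzkinLvu n i = 2 ^ n := by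
  set F : ℕ → ℕ → ℕ → ℚ := fun i k j =>
    ((n + 1).choose k : ℚ) * (k + i - 1).choose i * k.choose j *
      (if k + i + j ≤ n then ((n + 1 - k).choose (n - k - i - j) : ℚ) else 0) * 2 ^ j with hF
  have key : ∑ i ∈ Finset.range (n+1), (-2 : ℚ)^i *
      ∑ k ∈ Finset.range (n-i+1), ∑ j ∈ Finset.range (k+1), F i k j = (n+1) * 2^n := by
    -- extend the k and j ranges
    have step1 : ∀ i ∈ Finset.range (n+1),
        (∑ k ∈ Finset.range (n-i+1), ∑ j ∈ Finset.range (k+1), F i k j)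
          = ∑ k ∈ Finset.range (n+1), ∑ j ∈ Finset.range (n+1), F i k j := by
      intro i hi
      have hi' : i ≤ n := Finset.mem_range_succ_iff.mp hi
      have ext_j : ∀ k ∈ Finset.range (n+1),
          (∑ j ∈ Finset.range (k+1), F i k j) = ∑ j ∈ Finset.range (n+1), F i k j := by
        intro k hk
        have hk' : k ≤ n := Finset.mem_range_succ_iff.mp hk
        apply Finset.sum_subset (by gcongr <;> omega)
        intro j _ hj
        have : k < j := by simp only [Finset.mem_range] at hj ⊢; omega
        simp [hF, Nat.choose_eq_zero_of_lt this]
      rw [← Finset.sum_congr rfl ext_j]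
      apply Finset.sum_subset (by gcongr <;> omega)
      intro k hk hknot
      have hk2 : n - i + 1 ≤ k := by
        simp only [Finset.mem_range] at hknot ⊢; omega
      apply Finset.sum_eq_zero
      intro j _
      have : ¬ (k + i + j ≤ n) := by omega
      simp [hF, this]
    rw [Finset.sum_congr rfl (fun i hi => by rw [step1 i hi])]
    simp_rw [Finset.mul_sum]
    rw [Finset.sum_comm]
    have inner_eq : ∀ k ∈ Finset.range (n+1),
        (∑ i ∈ Finset.range (n+1), ∑ j ∈ Finset.range (n+1), (-2:ℚ)^i * F i k j)
          = ((n+1).choose k : ℚ) * ((n+1-k : ℕ) : ℚ) := by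
      intro k hk
      have hk' : k ≤ n := Finset.mem_range_succ_iff.mp hk
      set g : ℕ → ℕ → ℚ := fun i j =>
        (-2:ℚ)^i * ((k + i - 1).choose i : ℚ) * k.choose j *
          (if k + i + j ≤ n then ((n + 1 - k).choose (n - k - i - j) : ℚ) else 0) * 2 ^ j
        with hg
      have h1 : ∀ i j, (-2:ℚ)^i * F i k j = ((n+1).choose k : ℚ) * g i j := by
        intro i j; simp only [hF, hg]; ring
      simp_rw [h1, ← Finset.mul_sum]
      congr 1
      have hzero : ∀ i j, n < i + j → g i j = 0 := by
        intro i j hij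
        have : ¬ (k + i + j ≤ n) := by omega
        simp [hg, this]
      rw [sq_sum_eq_diag_sum n g hzero]
      rw [Finset.sum_eq_single_of_mem 0 (Finset.mem_range.mpr (by omega))]
      · rw [Finset.sum_range_one]
        simp only [hg, pow_zero, Nat.sub_zero, Nat.add_zero, Nat.choose_zero_right,
          Nat.cast_one, one_mul, mul_one]
        rw [show n + 1 - k = (n - k) + 1 by omega, Nat.choose_succ_self_right, if_pos hk']
      · intro s hs hs0
        have hs1 : 1 ≤ s := Nat.one_le_iff_ne_zero.mpr hs0
        by_cases hks : k + s ≤ n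
        · have hterm : ∀ i ∈ Finset.range (s+1),
              g i (s-i) = ((2:ℚ)^s * ((n + 1 - k).choose (n - k - s) : ℚ)) *
                ((-1:ℚ)^i * ((k + i - 1).choose i : ℚ) * (k.choose (s-i) : ℚ)) := by
            intro i hi
            have hi' : i ≤ s := Finset.mem_range_succ_iff.mp hi
            simp only [hg]
            rw [if_pos (by omega), show n - k - i - (s - i) = n - k - s by omega,
              show ((-2:ℚ))^i = (-1:ℚ)^i * 2^i by rw [neg_pow]]
            have h3 : (2:ℚ)^i * 2^(s-i) = 2^s := by rw [← pow_add]; congr 1; omega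
            linear_combination ((-1:ℚ)^i * ((k + i - 1).choose i : ℚ) *
              (k.choose (s-i) : ℚ) * ((n + 1 - k).choose (n - k - s) : ℚ)) * h3
          rw [Finset.sum_congr rfl hterm, ← Finset.mul_sum, keyA k s hs1, mul_zero]
        · apply Finset.sum_eq_zero
          intro i hi
          have hi' : i ≤ s := Finset.mem_range_succ_iff.mp hi
          have : ¬ (k + i + (s - i) ≤ n) := by omega
          simp [hg, this]
    rw [Finset.sum_congr rfl inner_eq]
    have : ∑ k ∈ Finset.range (n+1), ((n+1).choose k : ℚ) * ((n+1-k : ℕ) : ℚ)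
        = (((n+1) * 2^n : ℕ) : ℚ) := by
      rw [← nat_sum n]
      push_cast
      rfl
    rw [this]
    push_cast
    ring
  unfold gMotzkinLvu
  have hne : ((n : ℚ) + 1) ≠ 0 := by positivity
  calc ∑ i ∈ Finset.range (n + 1), (-2 : ℚ) ^ i *
        ((1 / (n + 1 : ℚ)) * ∑ k ∈ Finset.range (n - i + 1), ∑ j ∈ Finset.range (k + 1),
          ((n + 1).choose k : ℚ) * (k + i - 1).choose i * k.choose j *
            (if k + i + j ≤ n then ((n + 1 - k).choose (n - k - i - j) : ℚ) else 0) * 2 ^ j)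
      = (1 / (n + 1 : ℚ)) * ∑ i ∈ Finset.range (n+1), (-2 : ℚ)^i *
          ∑ k ∈ Finset.range (n-i+1), ∑ j ∈ Finset.range (k+1), F i k j := by
        rw [Finset.mul_sum]
        apply Finset.sum_congr rfl
        intro i _
        simp only [hF]
        ring
    _ = 2 ^ n := by
        rw [key]
        field_simp
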